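/- Suppose 𝒢 has exactly two zealots, with fixed opinions −1 and +1, every persuadable node is adjacent to both zealots, and the subgraph induced on the persuadable nodes 𝒫 is d-regular. Let L_𝒫 be the combinatorial Laplacian of the persuadable subgraph, u = ω(0), and v = ω(1). Then a nonzero vector φ ∈ ℝ^𝒫 is an eigenvector of the Jacobian block J_𝒫(x̄) at the harmonic state x̄ with nonnegative eigenvalue if and only if φ is an eigenvector of L_𝒫 with eigenvalue λ satisfying λ ≤ −2v(1 − 2γ(1 − v))/u. In particular, the space of unstable directions of J_𝒫(x̄) is spanned by the eigenvectors of L_𝒫 whose eigenvalues satisfy this bound. -/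

import Mathlib

open Finset Filter

namespace SBCM

variable {V : Type*} [Fintype V] [DecidableEq V]

/-- Sigmoidal influence weight. -/
noncomputable def wt (G : SimpleGraph V) [DecidableRel G.Adj] (γ δ : ℝ) (x : V → ℝ)
    (i j : V) : ℝ :=
  if G.Adj i j then 1 / (1 + Real.exp (γ * (x i - x j) ^ 2 - γ * δ)) else 0

/-- SBCM update operator. -/
noncomputable def F (G : SimpleGraph V) [DecidableRel G.Adj] (Z : Finset V) (γ δ : ℝ)
    (x : V → ℝ) (i : V) : ℝ :=
  if i ∈ Z then 0
  else (∑ j, wt G γ δ x i j * (x j - x i)) / (∑ j, wt G γ δ x i j)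

/-- Jacobian block over the persuadable nodes. -/
noncomputable def Jp (G : SimpleGraph V) [DecidableRel G.Adj] (Z : Finset V) (γ δ : ℝ)
    (x : V → ℝ) : Matrix {v : V // v ∉ Z} {v : V // v ∉ Z} ℝ :=
  fun i j => fderiv ℝ (fun y : V → ℝ => F G Z γ δ y i.val) x (Pi.single (j : V) (1 : ℝ))

/-- `μ` is a (real) eigenvalue of the matrix `M`. -/
def HasEig {n : Type*} [Fintype n] (M : Matrix n n ℝ) (μ : ℝ) : Prop :=
  ∃ φ : n → ℝ, φ ≠ 0 ∧ M.mulVec φ = μ • φ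

/-- All eigenvalues of `M` are strictly negative. -/
def LinStable {n : Type*} [Fintype n] (M : Matrix n n ℝ) : Prop :=
  ∀ μ : ℝ, HasEig M μ → μ < 0

/-- `M` has a strictly positive eigenvalue. -/
def LinUnstable {n : Type*} [Fintype n] (M : Matrix n n ℝ) : Prop :=
  ∃ μ : ℝ, 0 < μ ∧ HasEig M μ

end SBCM

namespace SBCM

/-- The harmonic state of a balanced-exposure graph: zealot `z₁` holds opinion `−1`,
zealot `z₂` holds opinion `+1`, and all persuadable nodes hold opinion `0`. -/
noncomputable def xbarBE {V : Type*} [DecidableEq V] (z₁ z₂ : V) : V → ℝ :=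
  fun v => if v = z₁ then -1 else if v = z₂ then 1 else 0

end SBCM

namespace SBCM

/-- The combinatorial Laplacian of the subgraph induced on the persuadable nodes. -/
noncomputable def Lp {V : Type*} [Fintype V] [DecidableEq V] (G : SimpleGraph V)
    [DecidableRel G.Adj] (Z : Finset V) :
    Matrix {v : V // v ∉ Z} {v : V // v ∉ Z} ℝ :=
  fun i j =>
    (if i = j then
        ((Finset.univ.filter fun k : {v : V // v ∉ Z} => G.Adj i.1 k.1).card : ℝ)
      else 0)
    - (if G.Adj i.1 j.1 then 1 else 0)

end SBCM

/-!
At the harmonic state the pulls of the two zealots cancel, so the numerator of `F_i` vanishes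
there and the derivative of `F_i` is that of the numerator divided by the strength
`s = 2v + u d`. On an edge the numerator term is `-r ω(r)` with `r = x_i - x_j`, so each
neighbour contributes `(r ω)'(x_i - x_j) (φ_j - φ_i)`: the factor is `u` for persuadable
neighbours and `v (1 - 2γ(1 - v))` for the two zealots. Hence
`J_𝒫(x̄) φ = s⁻¹ (c φ - u L_𝒫 φ)` with `c = -2v(1 - 2γ(1 - v))`, and `J_𝒫(x̄) φ = μ φ`
with `μ ≥ 0` is the same as `L_𝒫 φ = λ φ` with `λ = (c - s μ)/u ≤ c/u`.
-/

theorem exists_nonneg_eigen_iff_of_eq_smul {M : Type*} [AddCommGroup M] [Module ℝ M]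
    {a l φ : M} {s b c : ℝ} (hs : 0 < s) (hb : 0 < b) (h : a = s⁻¹ • (c • φ - b • l)) :
    (∃ μ : ℝ, 0 ≤ μ ∧ a = μ • φ) ↔ ∃ lam : ℝ, l = lam • φ ∧ lam ≤ c / b := by
  subst h
  constructor
  · rintro ⟨μ, hμ, hφ⟩
    refine ⟨(c - s * μ) / b, ?_, ?_⟩
    · linear_combination (norm := skip) (-(s / b)) • hφ
      match_scalars <;> field_simp <;> ring
    · rw [div_le_div_iff_of_pos_right hb]
      linarith [mul_nonneg hs.le hμ]
  · rintro ⟨lam, rfl, hlam⟩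
    refine ⟨(c - b * lam) / s, div_nonneg (by linarith [(le_div_iff₀ hb).mp hlam]) hs.le, ?_⟩
    match_scalars
    field_simp

lemma HasFDerivAt.div_of_eq_zero {𝕜 E : Type*} [NontriviallyNormedField 𝕜]
    [NormedAddCommGroup E] [NormedSpace 𝕜 E] {f g : E → 𝕜} {f' : E →L[𝕜] 𝕜} {x : E}
    (hf : HasFDerivAt f f' x) (hg : DifferentiableAt 𝕜 g x) (hfx : f x = 0) (hgx : g x ≠ 0) :
    HasFDerivAt (fun y => f y / g y) ((g x)⁻¹ • f') x := by
  simp only [div_eq_mul_inv]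
  refine (hf.fun_mul (hg.inv hgx).hasFDerivAt).congr_fderiv ?_
  ext v
  simp [hfx]

namespace SBCM

section Sigmoid

variable (γ δ : ℝ)

/-- The sigmoid `ω` of the paper. -/
noncomputable def sigmoid (r : ℝ) : ℝ := 1 / (1 + Real.exp (γ * r ^ 2 - γ * δ))

/-- At `r = ±1` this is the factor `v (1 - 2γ(1 - v))` of the paper. -/
noncomputable def fluxDeriv (r : ℝ) : ℝ :=
  sigmoid γ δ r * (1 - 2 * γ * r ^ 2 * (1 - sigmoid γ δ r))

lemma sigmoid_pos (r : ℝ) : 0 < sigmoid γ δ r := by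
  unfold sigmoid; positivity

lemma sigmoid_neg (r : ℝ) : sigmoid γ δ (-r) = sigmoid γ δ r := by
  simp [sigmoid]

lemma sigmoid_zero : sigmoid γ δ 0 = 1 / (1 + Real.exp (-(γ * δ))) := by
  simp [sigmoid]

lemma sigmoid_one : sigmoid γ δ 1 = 1 / (1 + Real.exp (γ * (1 - δ))) := by
  simp only [sigmoid]; ring_nf

lemma hasDerivAt_sigmoid (r : ℝ) :
    HasDerivAt (sigmoid γ δ) (-(2 * γ * r * sigmoid γ δ r * (1 - sigmoid γ δ r))) r := by
  have hexp : HasDerivAt (fun s => 1 + Real.exp (γ * s ^ 2 - γ * δ))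
      (Real.exp (γ * r ^ 2 - γ * δ) * (2 * γ * r)) r := by
    have h := ((hasDerivAt_pow 2 r).const_mul γ).sub_const (γ * δ)
    exact ((Real.hasDerivAt_exp _).comp r (h.congr_deriv (by ring))).const_add 1
  have hpos : 0 < 1 + Real.exp (γ * r ^ 2 - γ * δ) := by positivity
  refine ((hasDerivAt_const r (1 : ℝ)).div hexp hpos.ne').congr_deriv ?_
  unfold sigmoid
  field_simp
  ring

lemma differentiable_sigmoid : Differentiable ℝ (sigmoid γ δ) :=
  fun r => (hasDerivAt_sigmoid γ δ r).differentiableAt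

lemma hasDerivAt_flux (r : ℝ) :
    HasDerivAt (fun s => s * sigmoid γ δ s) (fluxDeriv γ δ r) r := by
  refine ((hasDerivAt_id r).mul (hasDerivAt_sigmoid γ δ r)).congr_deriv ?_
  unfold fluxDeriv
  simp only [id]
  ring

lemma fluxDeriv_zero : fluxDeriv γ δ 0 = sigmoid γ δ 0 := by
  simp [fluxDeriv]

lemma fluxDeriv_neg (r : ℝ) : fluxDeriv γ δ (-r) = fluxDeriv γ δ r := by
  simp [fluxDeriv, sigmoid_neg]

end Sigmoid


lemma wt_eq {V : Type*} (G : SimpleGraph V) [DecidableRel G.Adj] (γ δ : ℝ) (x : V → ℝ)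
    (i j : V) : wt G γ δ x i j = if G.Adj i j then sigmoid γ δ (x i - x j) else 0 := rfl

lemma extend_val_of_mem {V : Type*} {Z : Finset V} (φ : {v : V // v ∉ Z} → ℝ) {v : V}
    (hv : v ∈ Z) : Function.extend Subtype.val φ 0 v = 0 :=
  Function.extend_apply' _ _ _ fun ⟨k, hk⟩ => k.2 (hk ▸ hv)

section Derivative

variable {V : Type*} [Fintype V] (G : SimpleGraph V) [DecidableRel G.Adj] (γ δ : ℝ)

lemma differentiable_wt (i j : V) : Differentiable ℝ fun y : V → ℝ => wt G γ δ y i j := by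
  simp only [wt_eq]
  split_ifs
  · exact (differentiable_sigmoid γ δ).comp (f := fun y : V → ℝ => y i - y j) (by fun_prop)
  · exact differentiable_const 0

lemma hasFDerivAt_wt_mul_sub [DecidableEq V] (x : V → ℝ) (i j : V) :
    HasFDerivAt (fun y : V → ℝ => wt G γ δ y i j * (y j - y i))
      ((if G.Adj i j then fluxDeriv γ δ (x i - x j) else 0) •
        ((ContinuousLinearMap.proj j : (V → ℝ) →L[ℝ] ℝ) - ContinuousLinearMap.proj i)) x := by
  by_cases h : G.Adj i j
  · have hlin : HasFDerivAt (fun y : V → ℝ => y i - y j)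
        ((ContinuousLinearMap.proj i : (V → ℝ) →L[ℝ] ℝ) - ContinuousLinearMap.proj j) x :=
      (hasFDerivAt_apply i x).fun_sub (hasFDerivAt_apply j x)
    have hflux := ((hasDerivAt_flux γ δ (x i - x j)).comp_hasFDerivAt x hlin).neg
    have hfun : (fun y : V → ℝ => wt G γ δ y i j * (y j - y i)) =
        fun y => -((fun s => s * sigmoid γ δ s) ∘ fun y : V → ℝ => y i - y j) y := by
      funext y
      simp only [wt_eq, if_pos h, Function.comp_apply]
      ring
    rw [hfun, if_pos h]
    exact hflux.congr_fderiv (by rw [← smul_neg, neg_sub])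
  · simp only [wt_eq, if_neg h, zero_mul, zero_smul]
    exact hasFDerivAt_const 0 x

lemma hasFDerivAt_F [DecidableEq V] (Z : Finset V) (x : V → ℝ) {i : V} (hi : i ∉ Z)
    (hbal : ∑ j, wt G γ δ x i j * (x j - x i) = 0) (hS : ∑ j, wt G γ δ x i j ≠ 0) :
    HasFDerivAt (fun y => F G Z γ δ y i)
      ((∑ j, wt G γ δ x i j)⁻¹ • ∑ j, (if G.Adj i j then fluxDeriv γ δ (x i - x j) else 0) •
        ((ContinuousLinearMap.proj j : (V → ℝ) →L[ℝ] ℝ) - ContinuousLinearMap.proj i)) x := by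
  simp only [F, if_neg hi]
  exact HasFDerivAt.div_of_eq_zero
    (HasFDerivAt.fun_sum fun j _ => hasFDerivAt_wt_mul_sub G γ δ x i j)
    (DifferentiableAt.fun_sum fun j _ => differentiable_wt G γ δ i j x) hbal hS

lemma extend_val_eq_sum_single [DecidableEq V] (Z : Finset V) (φ : {v : V // v ∉ Z} → ℝ) :
    Function.extend Subtype.val φ 0 = ∑ k, φ k • Pi.single (k : V) (1 : ℝ) := by
  funext v
  simp only [Finset.sum_apply, Pi.smul_apply, Pi.single_apply, smul_eq_mul, mul_ite, mul_one,
    mul_zero]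
  by_cases hv : v ∈ Z
  · rw [extend_val_of_mem φ hv]
    exact (Finset.sum_eq_zero fun k _ => if_neg fun h => k.2 (h ▸ hv)).symm
  · rw [show v = ((⟨v, hv⟩ : {v // v ∉ Z}) : V) from rfl, Subtype.val_injective.extend_apply,
      Finset.sum_eq_single_of_mem _ (Finset.mem_univ _) fun k _ hk => if_neg fun h => hk
        (Subtype.ext h).symm, if_pos rfl]

lemma Jp_mulVec_apply [DecidableEq V] (Z : Finset V) (x : V → ℝ) (φ : {v : V // v ∉ Z} → ℝ)
    (i : {v : V // v ∉ Z}) :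
    (Jp G Z γ δ x).mulVec φ i =
      fderiv ℝ (fun y => F G Z γ δ y i) x (Function.extend Subtype.val φ 0) := by
  simp only [extend_val_eq_sum_single, map_sum, map_smul, Matrix.mulVec, dotProduct, Jp,
    smul_eq_mul, mul_comm]

end Derivative


section Harmonic

variable {V : Type*} [DecidableEq V] {z₁ z₂ : V}

lemma xbarBE_left : xbarBE z₁ z₂ z₁ = -1 := if_pos rfl

lemma xbarBE_right (hzz : z₁ ≠ z₂) : xbarBE z₁ z₂ z₂ = 1 := by
  simp [xbarBE, hzz.symm]

lemma xbarBE_coe (k : {v : V // v ∉ ({z₁, z₂} : Finset V)}) : xbarBE z₁ z₂ k = 0 := by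
  have hk := k.2
  simp only [Finset.mem_insert, Finset.mem_singleton, not_or] at hk
  simp [xbarBE, hk.1, hk.2]

variable [Fintype V]

lemma sum_eq_add_add_sum_subtype {M : Type*} [AddCommMonoid M] (hzz : z₁ ≠ z₂) (f : V → M) :
    ∑ j, f j = f z₁ + f z₂ + ∑ j : {v : V // v ∉ ({z₁, z₂} : Finset V)}, f j := by
  rw [← Fintype.sum_subtype_add_sum_subtype (· ∈ ({z₁, z₂} : Finset V)),
    ← Finset.sum_subtype {z₁, z₂} (fun _ => Iff.rfl), Finset.sum_pair hzz]

variable (G : SimpleGraph V) [DecidableRel G.Adj] (γ δ : ℝ)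

lemma Lp_mulVec_apply (Z : Finset V) (φ : {v : V // v ∉ Z} → ℝ) (i : {v : V // v ∉ Z}) :
    (Lp G Z).mulVec φ i = ∑ k, if G.Adj i.1 k.1 then φ i - φ k else 0 := by
  simp only [Matrix.mulVec, dotProduct, Lp, sub_mul, ite_mul, zero_mul, one_mul,
    Finset.sum_sub_distrib, Finset.sum_ite_eq, Finset.mem_univ, if_true]
  rw [← Finset.sum_filter (fun k => G.Adj i.1 k.1) (fun k => φ i - φ k),
    Finset.sum_sub_distrib, Finset.sum_const, nsmul_eq_mul, Finset.sum_filter]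

lemma sum_wt_xbarBE (hzz : z₁ ≠ z₂)
    (hadj : ∀ i : V, i ∉ ({z₁, z₂} : Finset V) → G.Adj i z₁ ∧ G.Adj i z₂)
    (i : {v : V // v ∉ ({z₁, z₂} : Finset V)}) :
    ∑ j, wt G γ δ (xbarBE z₁ z₂) i j =
      2 * sigmoid γ δ 1 +
        sigmoid γ δ 0 * (Finset.univ.filter fun k : {v : V // v ∉ ({z₁, z₂} : Finset V)} =>
          G.Adj i.1 k.1).card := by
  rw [sum_eq_add_add_sum_subtype hzz]
  simp only [wt_eq, hadj i.1 i.2, if_true, xbarBE_left, xbarBE_right hzz, xbarBE_coe]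
  rw [← Finset.sum_filter, Finset.sum_const, nsmul_eq_mul]
  norm_num [sigmoid_neg]
  ring

lemma Jp_xbarBE_mulVec_apply (hzz : z₁ ≠ z₂)
    (hadj : ∀ i : V, i ∉ ({z₁, z₂} : Finset V) → G.Adj i z₁ ∧ G.Adj i z₂)
    (φ : {v : V // v ∉ ({z₁, z₂} : Finset V)} → ℝ) (i : {v : V // v ∉ ({z₁, z₂} : Finset V)}) :
    (Jp G {z₁, z₂} γ δ (xbarBE z₁ z₂)).mulVec φ i =
      (∑ j, wt G γ δ (xbarBE z₁ z₂) i j)⁻¹ *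
        (-(2 * sigmoid γ δ 1 * (1 - 2 * γ * (1 - sigmoid γ δ 1))) * φ i -
          sigmoid γ δ 0 * (Lp G {z₁, z₂}).mulVec φ i) := by
  have hbal : ∑ j, wt G γ δ (xbarBE z₁ z₂) i j * (xbarBE z₁ z₂ j - xbarBE z₁ z₂ i) = 0 := by
    rw [sum_eq_add_add_sum_subtype hzz]
    simp [wt_eq, hadj i.1 i.2, xbarBE_left, xbarBE_right hzz, xbarBE_coe, sigmoid_neg]
  have hS : ∑ j, wt G γ δ (xbarBE z₁ z₂) i j ≠ 0 := by
    rw [sum_wt_xbarBE G γ δ hzz hadj]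
    simp only [sigmoid]
    positivity
  rw [Jp_mulVec_apply, (hasFDerivAt_F G γ δ _ _ i.2 hbal hS).fderiv, Lp_mulVec_apply]
  simp only [FunLike.coe_smul, FunLike.coe_sum, Pi.smul_apply,
    Finset.sum_apply, smul_eq_mul, FunLike.coe_sub, Pi.sub_apply,
    ContinuousLinearMap.proj_apply]
  congr 1
  rw [sum_eq_add_add_sum_subtype hzz]
  simp only [hadj i.1 i.2, if_true, xbarBE_left, xbarBE_right hzz, xbarBE_coe,
    extend_val_of_mem φ (Finset.mem_insert_self z₁ {z₂}),
    extend_val_of_mem φ (Finset.mem_insert_of_mem (Finset.mem_singleton_self z₂)),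
    Subtype.val_injective.extend_apply]
  have hsum : ∑ k : {v : V // v ∉ ({z₁, z₂} : Finset V)},
      (if G.Adj i k then fluxDeriv γ δ (0 - 0) else 0) * (φ k - φ i) =
        -(sigmoid γ δ 0 * ∑ k : {v : V // v ∉ ({z₁, z₂} : Finset V)},
          if G.Adj i k then φ i - φ k else 0) := by
    rw [sub_self, fluxDeriv_zero, Finset.mul_sum, ← Finset.sum_neg_distrib]
    refine Finset.sum_congr rfl fun k _ => ?_
    split_ifs <;> ring
  rw [hsum]
  simp only [zero_sub, neg_neg, fluxDeriv_neg]
  unfold fluxDeriv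
  ring

end Harmonic


lemma Jp_xbarBE_mulVec_of_regular {V : Type*} [Fintype V] [DecidableEq V]
    (G : SimpleGraph V) [DecidableRel G.Adj] (γ δ : ℝ) {z₁ z₂ : V} (hzz : z₁ ≠ z₂)
    (hadj : ∀ i : V, i ∉ ({z₁, z₂} : Finset V) → G.Adj i z₁ ∧ G.Adj i z₂) {d : ℕ}
    (hreg : ∀ i : {v : V // v ∉ ({z₁, z₂} : Finset V)},
      (Finset.univ.filter fun k : {v : V // v ∉ ({z₁, z₂} : Finset V)} =>
        G.Adj i.1 k.1).card = d)
    (φ : {v : V // v ∉ ({z₁, z₂} : Finset V)} → ℝ) :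
    (Jp G {z₁, z₂} γ δ (xbarBE z₁ z₂)).mulVec φ =
      (2 * sigmoid γ δ 1 + sigmoid γ δ 0 * d)⁻¹ •
        ((-(2 * sigmoid γ δ 1 * (1 - 2 * γ * (1 - sigmoid γ δ 1)))) • φ -
          sigmoid γ δ 0 • (Lp G {z₁, z₂}).mulVec φ) := by
  funext i
  rw [Jp_xbarBE_mulVec_apply G γ δ hzz hadj, sum_wt_xbarBE G γ δ hzz hadj, hreg]
  simp only [Pi.smul_apply, Pi.sub_apply, smul_eq_mul]

end SBCM

theorem stmt_18_general {V : Type*} [Fintype V] [DecidableEq V]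
    (G : SimpleGraph V) [DecidableRel G.Adj] (z₁ z₂ : V) (hzz : z₁ ≠ z₂)
    (hadj : ∀ i : V, i ∉ ({z₁, z₂} : Finset V) → G.Adj i z₁ ∧ G.Adj i z₂)
    (d : ℕ)
    (hreg : ∀ i : {v : V // v ∉ ({z₁, z₂} : Finset V)},
      (Finset.univ.filter fun k : {v : V // v ∉ ({z₁, z₂} : Finset V)} =>
        G.Adj i.1 k.1).card = d)
    (γ δ : ℝ) :
    ∀ φ : {v : V // v ∉ ({z₁, z₂} : Finset V)} → ℝ, φ ≠ 0 →
      ((∃ μ : ℝ, 0 ≤ μ ∧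
          (SBCM.Jp G ({z₁, z₂} : Finset V) γ δ (SBCM.xbarBE z₁ z₂)).mulVec φ = μ • φ) ↔
        (∃ lam : ℝ, (SBCM.Lp G ({z₁, z₂} : Finset V)).mulVec φ = lam • φ ∧
          lam ≤ -(2 * (1 / (1 + Real.exp (γ * (1 - δ)))) *
              (1 - 2 * γ * (1 - 1 / (1 + Real.exp (γ * (1 - δ)))))) /
            (1 / (1 + Real.exp (-(γ * δ)))))) := by
  intro φ _
  rw [← SBCM.sigmoid_one, ← SBCM.sigmoid_zero]
  have hu := SBCM.sigmoid_pos γ δ 0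
  refine exists_nonneg_eigen_iff_of_eq_smul ?_ hu
    (SBCM.Jp_xbarBE_mulVec_of_regular G γ δ hzz hadj hreg φ)
  have hv := SBCM.sigmoid_pos γ δ 1
  positivity

/-- With two zealots of opinions `−1, +1`, every persuadable node adjacent
to both, and a `d`-regular persuadable subgraph with Laplacian `L_𝒫`, a nonzero
`φ` is an eigenvector of `J_𝒫(x̄)` with nonnegative eigenvalue iff it is an eigenvector
of `L_𝒫` with eigenvalue `λ ≤ −2v(1 − 2γ(1 − v))/u`, where `u = ω(0)`, `v = ω(1)`. -/
theorem stmt_18 {V : Type*} [Fintype V] [DecidableEq V]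
    (G : SimpleGraph V) [DecidableRel G.Adj] (z₁ z₂ : V) (hzz : z₁ ≠ z₂)
    (hadj : ∀ i : V, i ∉ ({z₁, z₂} : Finset V) → G.Adj i z₁ ∧ G.Adj i z₂)
    (d : ℕ)
    (hreg : ∀ i : {v : V // v ∉ ({z₁, z₂} : Finset V)},
      (Finset.univ.filter fun k : {v : V // v ∉ ({z₁, z₂} : Finset V)} =>
        G.Adj i.1 k.1).card = d)
    (γ δ : ℝ) (hγ : 0 ≤ γ) (hδ : 0 ≤ δ) :
    ∀ φ : {v : V // v ∉ ({z₁, z₂} : Finset V)} → ℝ, φ ≠ 0 →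
      ((∃ μ : ℝ, 0 ≤ μ ∧
          (SBCM.Jp G ({z₁, z₂} : Finset V) γ δ (SBCM.xbarBE z₁ z₂)).mulVec φ = μ • φ) ↔
        (∃ lam : ℝ, (SBCM.Lp G ({z₁, z₂} : Finset V)).mulVec φ = lam • φ ∧
          lam ≤ -(2 * (1 / (1 + Real.exp (γ * (1 - δ)))) *
              (1 - 2 * γ * (1 - 1 / (1 + Real.exp (γ * (1 - δ)))))) /
            (1 / (1 + Real.exp (-(γ * δ)))))) :=
  stmt_18_general G z₁ z₂ hzz hadj d hreg γ δ
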